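/- arXiv:math/0603688 — 3 statements merged into one kernel-verified Lean document; each statement's English description precedes it below -/
import Mathlib

section
/- Let S be a ring and R a commutative subring, with T = { t ∈ R : t^{-1} ∈ S }. If A ∈ Mat_n(R) is invertible over S, then every entry of A^{-1} lies in RT^{-1}. Consequently the rational closure R(R,S) equals RT^{-1} and coincides with the division closure D(R,S); in particular both are commutative subrings of S. -/
section Aux

variable {R S : Type*} [CommRing R] [Ring S]

/-- If `u` is a two-sided inverse of `a` and `b` commutes with `a`, then `b` commutes
with `u`. -/
lemma comm_of_inv {a u b : S} (h1 : a * u = 1) (h2 : u * a = 1)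
    (h3 : a * b = b * a) : u * b = b * u := by
  calc u * b = u * b * (a * u) := by rw [h1, mul_one]
    _ = u * (b * a) * u := by simp only [mul_assoc]
    _ = u * (a * b) * u := by rw [h3]
    _ = (u * a) * (b * u) := by simp only [mul_assoc]
    _ = b * u := by rw [h2, one_mul]

/-- Key lemma: if a matrix over `R` is invertible over `S`, then `f (det A)` has a
two-sided inverse `u` in `S` and the entries of the inverse are `f (adj A i j) * u`. -/
lemma invMatrix_entries (f : R →+* S) {n : ℕ} (A : Matrix (Fin n) (Fin n) R)
    (B : Matrix (Fin n) (Fin n) S) (h1 : A.map f * B = 1) (h2 : B * A.map f = 1) :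
    ∃ u : S, f A.det * u = 1 ∧ u * f A.det = 1 ∧
      ∀ i j, B i j = f (A.adjugate i j) * u := by
  set S' : Subring S := Subring.centralizer (f.range : Set S) with hS'
  set C : Subring S := Subring.centralizer (S' : Set S) with hC
  have hrangeS' : ∀ r : R, f r ∈ S' := by
    intro r
    refine Subring.mem_centralizer_iff.2 ?_
    rintro g ⟨a, rfl⟩
    rw [← map_mul, ← map_mul, mul_comm]
  have hrangeC : ∀ r : R, f r ∈ C := by
    intro r
    refine Subring.mem_centralizer_iff.2 ?_
    intro g hg
    exact (Subring.mem_centralizer_iff.1 hg (f r) ⟨r, rfl⟩).symm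
  have hCS' : ∀ x ∈ C, x ∈ S' := by
    intro x hx
    refine Subring.mem_centralizer_iff.2 ?_
    rintro g ⟨a, rfl⟩
    exact Subring.mem_centralizer_iff.1 hx (f a) (hrangeS' a)
  -- entries of B commute with every element of S'
  have hBS' : ∀ s ∈ S', ∀ i j, s * B i j = B i j * s := by
    intro s hs i j
    have hMD : Commute (A.map f) (Matrix.diagonal (fun _ : Fin n => s)) := by
      show _ = _
      ext i' j'
      rw [Matrix.diagonal_mul, Matrix.mul_diagonal, Matrix.map_apply]
      exact Subring.mem_centralizer_iff.1 hs (f (A i' j')) ⟨A i' j', rfl⟩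
    have hDB : B * Matrix.diagonal (fun _ : Fin n => s)
        = Matrix.diagonal (fun _ : Fin n => s) * B := by
      let uM : (Matrix (Fin n) (Fin n) S)ˣ := ⟨A.map f, B, h1, h2⟩
      have huM : Commute (Units.val uM)
          (Matrix.diagonal (fun _ : Fin n => s)) := hMD
      exact Commute.units_inv_left huM
    have := congrFun (congrFun hDB i) j
    simpa [Matrix.diagonal_mul, Matrix.mul_diagonal] using this.symm
  have hBC : ∀ i j, B i j ∈ C := by
    intro i j
    exact Subring.mem_centralizer_iff.2 (fun g hg => hBS' g hg i j)
  -- C is commutative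
  letI : CommRing C :=
    { (inferInstance : Ring C) with
      mul_comm := fun a b =>
        Subtype.ext (Subring.mem_centralizer_iff.1 b.2 a.1 (hCS' a.1 a.2)) }
  -- move everything into C
  let F : R →+* C := f.codRestrict C hrangeC
  let B' : Matrix (Fin n) (Fin n) C := Matrix.of fun i j => (⟨B i j, hBC i j⟩ : C)
  have hmapA : (A.map F).map C.subtype = A.map f := by
    ext i j; rfl
  have hmapB : B'.map C.subtype = B := by
    ext i j; rfl
  have hinj : Function.Injective
      (fun M : Matrix (Fin n) (Fin n) C => M.map C.subtype) := by
    intro X Y h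
    ext i j
    exact congrFun (congrFun h i) j
  have hp1 : A.map F * B' = 1 := by
    apply hinj
    show (A.map F * B').map C.subtype = (1 : Matrix (Fin n) (Fin n) C).map C.subtype
    rw [Matrix.map_mul, hmapA, hmapB, h1, Matrix.map_one _ (map_zero _) (map_one _)]
  have hp2 : B' * A.map F = 1 := by
    apply hinj
    show (B' * A.map F).map C.subtype = (1 : Matrix (Fin n) (Fin n) C).map C.subtype
    rw [Matrix.map_mul, hmapA, hmapB, h2, Matrix.map_one _ (map_zero _) (map_one _)]
  have hdet : (A.map F).det * B'.det = 1 := by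
    rw [← Matrix.det_mul, hp1, Matrix.det_one]
  have hdetF : (A.map F).det = F A.det := (RingHom.map_det F A).symm
  have hadjF : (A.map F).adjugate = A.adjugate.map F := by
    have := RingHom.map_adjugate F A
    simpa [RingHom.mapMatrix_apply] using this.symm
  have e0 : A.adjugate.map F = (A.map F).det • B' := by
    rw [← hadjF]
    calc (A.map F).adjugate = (B' * A.map F) * (A.map F).adjugate := by rw [hp2, one_mul]
      _ = B' * ((A.map F) * (A.map F).adjugate) := by rw [mul_assoc]
      _ = B' * ((A.map F).det • 1) := by rw [Matrix.mul_adjugate]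
      _ = (A.map F).det • (B' * 1) := by rw [Matrix.mul_smul]
      _ = (A.map F).det • B' := by rw [mul_one]
  -- conclude
  refine ⟨(B'.det : S), ?_, ?_, ?_⟩
  · have h : F A.det * B'.det = 1 := by rw [← hdetF]; exact hdet
    exact congrArg Subtype.val h
  · have h : B'.det * F A.det = 1 := by rw [← hdetF, mul_comm]; exact hdet
    exact congrArg Subtype.val h
  · intro i j
    have eC : B' i j = F (A.adjugate i j) * B'.det := by
      have e1 : F (A.adjugate i j) = (A.map F).det * B' i j :=
        congrFun (congrFun e0 i) j
      rw [e1, hdetF, mul_comm (F A.det) (B' i j), mul_assoc, ← hdetF, hdet, mul_one]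
    exact congrArg Subtype.val eC


/-- `RT⁻¹` as a subring of `S`. -/
def RTinv (f : R →+* S) : Subring S where
  carrier := {x : S | ∃ (r t : R) (u : S), f t * u = 1 ∧ u * f t = 1 ∧ x = f r * u}
  one_mem' := ⟨1, 1, 1, by simp, by simp, by simp⟩
  zero_mem' := ⟨0, 1, 1, by simp, by simp, by simp⟩
  mul_mem' := by
    rintro x y ⟨r, t, u, ht1, ht2, rfl⟩ ⟨r', t', u', ht1', ht2', rfl⟩
    have hc1 : u * f t' = f t' * u :=
      comm_of_inv ht1 ht2 (by rw [← map_mul, ← map_mul, mul_comm])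
    have hc2 : u * f r' = f r' * u :=
      comm_of_inv ht1 ht2 (by rw [← map_mul, ← map_mul, mul_comm])
    have hd1 : u' * f t = f t * u' :=
      comm_of_inv ht1' ht2' (by rw [← map_mul, ← map_mul, mul_comm])
    have key1 : f t' * (u * u') = u := by
      rw [← mul_assoc, ← hc1, mul_assoc, ht1', mul_one]
    refine ⟨r * r', t * t', u * u', ?_, ?_, ?_⟩
    · rw [map_mul]
      calc f t * f t' * (u * u') = f t * (f t' * (u * u')) := by rw [mul_assoc]
        _ = f t * u := by rw [key1]
        _ = 1 := ht1
    · rw [map_mul]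
      calc u * u' * (f t * f t') = u * (u' * f t) * f t' := by simp only [mul_assoc]
        _ = u * (f t * u') * f t' := by rw [hd1]
        _ = u * f t * (u' * f t') := by simp only [mul_assoc]
        _ = 1 := by rw [ht2, ht2', mul_one]
    · rw [map_mul]
      calc f r * u * (f r' * u') = f r * (u * f r') * u' := by simp only [mul_assoc]
        _ = f r * (f r' * u) * u' := by rw [hc2]
        _ = f r * f r' * (u * u') := by simp only [mul_assoc]
  add_mem' := by
    rintro x y ⟨r, t, u, ht1, ht2, rfl⟩ ⟨r', t', u', ht1', ht2', rfl⟩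
    have hc1 : u * f t' = f t' * u :=
      comm_of_inv ht1 ht2 (by rw [← map_mul, ← map_mul, mul_comm])
    have hd1 : u' * f t = f t * u' :=
      comm_of_inv ht1' ht2' (by rw [← map_mul, ← map_mul, mul_comm])
    have key1 : f t' * (u * u') = u := by
      rw [← mul_assoc, ← hc1, mul_assoc, ht1', mul_one]
    have key2 : f t * (u * u') = u' := by rw [← mul_assoc, ht1, one_mul]
    refine ⟨r * t' + r' * t, t * t', u * u', ?_, ?_, ?_⟩
    · rw [map_mul]
      calc f t * f t' * (u * u') = f t * (f t' * (u * u')) := by rw [mul_assoc]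
        _ = f t * u := by rw [key1]
        _ = 1 := ht1
    · rw [map_mul]
      calc u * u' * (f t * f t') = u * (u' * f t) * f t' := by simp only [mul_assoc]
        _ = u * (f t * u') * f t' := by rw [hd1]
        _ = u * f t * (u' * f t') := by simp only [mul_assoc]
        _ = 1 := by rw [ht2, ht2', mul_one]
    · rw [map_add, add_mul, map_mul, map_mul, mul_assoc, mul_assoc, key1, key2]
  neg_mem' := by
    rintro x ⟨r, t, u, ht1, ht2, rfl⟩
    exact ⟨-r, t, u, ht1, ht2, by rw [map_neg, neg_mul]⟩

end Aux

/-- The division closure of a subring `R₀` of `S`. -/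
def divisionClosure {S : Type*} [Ring S] (R₀ : Subring S) : Subring S :=
  sInf {D : Subring S | R₀ ≤ D ∧
    ∀ x ∈ D, ∀ y : S, x * y = 1 → y * x = 1 → y ∈ D}

/-- The rational closure of a subring `R₀` of `S`: the smallest subring `D ⊇ R₀`
such that for every matrix over `R₀` invertible over `S`, all entries of the
inverse lie in `D`. -/
def rationalClosure {S : Type*} [Ring S] (R₀ : Subring S) : Subring S :=
  sInf {D : Subring S | R₀ ≤ D ∧
    ∀ (n : ℕ) (A B : Matrix (Fin n) (Fin n) S), (∀ i j, A i j ∈ R₀) →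
      A * B = 1 → B * A = 1 → ∀ i j, B i j ∈ D}

/-- Every entry of the inverse of a matrix over `R` lies in `RT⁻¹`, and the
rational closure equals `RT⁻¹` and coincides with the division closure; both
are commutative. -/
theorem rationalClosure_eq_RTinv_eq_divisionClosure
    {R S : Type*} [CommRing R] [Ring S] (f : R →+* S) (hf : Function.Injective f) :
    (∀ (n : ℕ) (A : Matrix (Fin n) (Fin n) R) (B : Matrix (Fin n) (Fin n) S),
      A.map f * B = 1 → B * A.map f = 1 → ∀ i j,
        B i j ∈ {x : S | ∃ (r t : R) (u : S), f t * u = 1 ∧ u * f t = 1 ∧ x = f r * u}) ∧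
    (rationalClosure f.range : Set S) =
      {x : S | ∃ (r t : R) (u : S), f t * u = 1 ∧ u * f t = 1 ∧ x = f r * u} ∧
    rationalClosure f.range = divisionClosure f.range ∧
    (∀ x ∈ rationalClosure f.range, ∀ y ∈ rationalClosure f.range, x * y = y * x) := by
  have part1 : ∀ (n : ℕ) (A : Matrix (Fin n) (Fin n) R) (B : Matrix (Fin n) (Fin n) S),
      A.map f * B = 1 → B * A.map f = 1 → ∀ i j,
        B i j ∈ {x : S | ∃ (r t : R) (u : S), f t * u = 1 ∧ u * f t = 1 ∧ x = f r * u} := by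
    intro n A B h1 h2 i j
    obtain ⟨u, hu1, hu2, hB⟩ := invMatrix_entries f A B h1 h2
    exact ⟨A.adjugate i j, A.det, u, hu1, hu2, hB i j⟩
  have hmemRT : ∀ x, x ∈ RTinv f ↔
      ∃ (r t : R) (u : S), f t * u = 1 ∧ u * f t = 1 ∧ x = f r * u := fun _ => Iff.rfl
  have hmem : RTinv f ∈ {D : Subring S | f.range ≤ D ∧
      ∀ (n : ℕ) (A B : Matrix (Fin n) (Fin n) S), (∀ i j, A i j ∈ f.range) →
        A * B = 1 → B * A = 1 → ∀ i j, B i j ∈ D} := by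
    constructor
    · rintro x ⟨r, rfl⟩
      exact ⟨r, 1, 1, by simp, by simp, by simp⟩
    · intro n A B hA h1 h2 i j
      choose A₀ hA₀ using fun i j => RingHom.mem_range.1 (hA i j)
      have hmap : (Matrix.of A₀).map f = A := by ext i' j'; exact hA₀ i' j'
      rw [← hmap] at h1 h2
      exact part1 n (Matrix.of A₀) B h1 h2 i j
  have hle : f.range ≤ rationalClosure f.range := le_sInf fun D hD => hD.1
  have hrat : rationalClosure f.range = RTinv f := by
    apply le_antisymm
    · exact sInf_le hmem
    · rintro x ⟨r, t, u, ht1, ht2, rfl⟩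
      refine Subring.mul_mem _ (hle ⟨r, rfl⟩) ?_
      rw [rationalClosure, Subring.mem_sInf]
      intro D hD
      have h1 : (Matrix.of fun _ _ : Fin 1 => f t) * (Matrix.of fun _ _ : Fin 1 => u) = 1 := by
        ext i j
        simp [Matrix.mul_apply, Matrix.one_apply, Subsingleton.elim i j, ht1]
      have h2 : (Matrix.of fun _ _ : Fin 1 => u) * (Matrix.of fun _ _ : Fin 1 => f t) = 1 := by
        ext i j
        simp [Matrix.mul_apply, Matrix.one_apply, Subsingleton.elim i j, ht2]
      exact hD.2 1 _ _ (fun i j => ⟨t, rfl⟩) h1 h2 0 0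
  have hdivle : f.range ≤ divisionClosure f.range := le_sInf fun D hD => hD.1
  have hdivclosed : ∀ x ∈ divisionClosure f.range, ∀ y : S, x * y = 1 → y * x = 1 →
      y ∈ divisionClosure f.range := by
    intro x hx y hy1 hy2
    rw [divisionClosure, Subring.mem_sInf] at hx ⊢
    exact fun D hD => hD.2 x (hx D hD) y hy1 hy2
  have hdiv : rationalClosure f.range = divisionClosure f.range := by
    apply le_antisymm
    · apply sInf_le
      refine ⟨hdivle, ?_⟩
      intro n A B hA h1 h2 i j
      choose A₀ hA₀ using fun i j => RingHom.mem_range.1 (hA i j)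
      have hmap : (Matrix.of A₀).map f = A := by ext i' j'; exact hA₀ i' j'
      rw [← hmap] at h1 h2
      obtain ⟨u, hu1, hu2, hB⟩ := invMatrix_entries f (Matrix.of A₀) B h1 h2
      rw [hB i j]
      exact Subring.mul_mem _ (hdivle ⟨_, rfl⟩)
        (hdivclosed _ (hdivle ⟨_, rfl⟩) u hu1 hu2)
    · apply sInf_le
      refine ⟨hle, ?_⟩
      intro x hx y hy1 hy2
      rw [hrat] at hx ⊢
      obtain ⟨r, t, u, ht1, ht2, rfl⟩ := hx
      refine ⟨t, r, u * y, ?_, ?_, ?_⟩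
      · rw [← mul_assoc]; exact hy1
      · have hyfr : y * f r = f t := by
          have h : f r = f r * u * f t := by rw [mul_assoc, ht2, mul_one]
          rw [h, ← mul_assoc, hy2, one_mul]
        rw [mul_assoc, hyfr]; exact ht2
      · rw [← mul_assoc, ht1, one_mul]
  have hcomm : ∀ x ∈ rationalClosure f.range, ∀ y ∈ rationalClosure f.range,
      x * y = y * x := by
    intro x hx y hy
    rw [hrat] at hx hy
    obtain ⟨r, t, u, ht1, ht2, rfl⟩ := hx
    obtain ⟨r', t', u', ht1', ht2', rfl⟩ := hy
    have hc2 : u * f r' = f r' * u :=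
      comm_of_inv ht1 ht2 (by rw [← map_mul, ← map_mul, mul_comm])
    have hd2 : u' * f r = f r * u' :=
      comm_of_inv ht1' ht2' (by rw [← map_mul, ← map_mul, mul_comm])
    have hcu : u' * f t = f t * u' :=
      comm_of_inv ht1' ht2' (by rw [← map_mul, ← map_mul, mul_comm])
    have huu : u * u' = u' * u := comm_of_inv ht1 ht2 hcu.symm
    calc f r * u * (f r' * u') = f r * (u * f r') * u' := by simp only [mul_assoc]
      _ = f r * (f r' * u) * u' := by rw [hc2]
      _ = f r * f r' * (u * u') := by simp only [mul_assoc]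
      _ = f r' * f r * (u' * u) := by rw [← map_mul, mul_comm r r', map_mul, huu]
      _ = f r' * (f r * u') * u := by simp only [mul_assoc]
      _ = f r' * (u' * f r) * u := by rw [hd2]
      _ = f r' * u' * (f r * u) := by simp only [mul_assoc]
  exact ⟨part1, by rw [hrat]; rfl, hdiv, hcomm⟩
end

section
/- Let f : R → S be a ring homomorphism whose image is commutative, and let T = { t ∈ im f : t^{-1} ∈ S }. Then the division closure and rational closure of im f in S both equal (im f)T^{-1} = { f(r) t^{-1} : r ∈ R, t ∈ T }, a commutative subring of S. -/
open scoped IsMulCommutative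

theorem Set.mem_centralizer_of_mul_eq_one {M : Type*} [Monoid M] {X : Set M} {x y : M}
    (hx : x ∈ X.centralizer) (hxy : x * y = 1) (hyx : y * x = 1) : y ∈ X.centralizer :=
  fun m hm => Commute.units_inv_right (u := ⟨x, y, hxy, hyx⟩) (hx m hm)

namespace Matrix

variable {n : Type*} [Fintype n] [DecidableEq n]

theorem commute_apply_of_mul_eq_one {S : Type*} [Semiring S] {A B : Matrix n n S}
    (hAB : A * B = 1) (hBA : B * A = 1) {z : S} (hz : ∀ i j, Commute z (A i j)) (i j : n) :
    Commute z (B i j) := by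
  have hzA : Commute (scalar n z) A := by
    ext i j
    simp [(hz i j).eq]
  have hzB := (hzA.units_inv_right (u := ⟨A, B, hAB, hBA⟩)).eq
  show z * B i j = B i j * z
  simpa using congrFun (congrFun hzB i) j

theorem mem_centralizer_centralizer_of_mul_eq_one {S : Type*} [Semiring S] {X : Set S}
    {A B : Matrix n n S} (hA : ∀ i j, A i j ∈ X) (hAB : A * B = 1) (hBA : B * A = 1) (i j : n) :
    B i j ∈ X.centralizer.centralizer :=
  fun _ hz => (commute_apply_of_mul_eq_one hAB hBA (fun k l => (hz _ (hA k l)).symm) i j).eq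

variable {K : Type*} [CommRing K]

theorem eq_det_smul_adjugate_of_mul_eq_one {A B : Matrix n n K} (hAB : A * B = 1) :
    B = B.det • A.adjugate := by
  have hdet : B.det * A.det = 1 := by rw [mul_comm, ← det_mul, hAB, det_one]
  calc B = (B.det * A.det) • B := by rw [hdet, one_smul]
    _ = B.det • (A.adjugate * A * B) := by rw [adjugate_mul, smul_mul, one_mul, mul_smul]
    _ = B.det • A.adjugate := by rw [mul_assoc, hAB, mul_one]

theorem det_mem_of_forall_mem {C : Subring K} {M : Matrix n n K} (hM : ∀ i j, M i j ∈ C) :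
    M.det ∈ C := by
  rw [det_apply]
  exact sum_mem fun σ _ => Subring.zsmul_mem _ (prod_mem fun i _ => hM _ _) _

theorem adjugate_mem_of_forall_mem {C : Subring K} {M : Matrix n n K} (hM : ∀ i j, M i j ∈ C)
    (i j : n) : M.adjugate i j ∈ C := by
  rw [adjugate_apply]
  refine det_mem_of_forall_mem fun k l => ?_
  rw [updateRow_apply]
  split_ifs
  · rw [Pi.single_apply]; split_ifs <;> simp
  · exact hM k l

end Matrix

section Fractions

variable {S : Type*} [Ring S]

theorem Subring.isMulCommutative_centralizer_centralizer {s : Set S}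
    (hs : ∀ x ∈ s, ∀ y ∈ s, x * y = y * x) :
    IsMulCommutative (Subring.centralizer s.centralizer) :=
  .of_setLike_mul_comm (Set.centralizer_centralizer_comm_of_comm hs)

theorem Subring.mem_centralizer_centralizer_of_mul_eq_one {C : Subring S} {d u : S} (hd : d ∈ C)
    (hdu : d * u = 1) (hud : u * d = 1) : u ∈ (C : Set S).centralizer.centralizer :=
  Set.mem_centralizer_of_mul_eq_one (Set.subset_centralizer_centralizer hd) hdu hud

theorem Matrix.exists_eq_mul_inv_of_mul_eq_one {n : Type*} [Fintype n] [DecidableEq n]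
    {C : Subring S} (hC : ∀ x ∈ C, ∀ y ∈ C, x * y = y * x) {A B : Matrix n n S}
    (hA : ∀ i j, A i j ∈ C) (hAB : A * B = 1) (hBA : B * A = 1) :
    ∃ d ∈ C, ∃ e : S, d * e = 1 ∧ e * d = 1 ∧ ∀ i j, ∃ a ∈ C, B i j = a * e := by
  set K := Subring.centralizer (C : Set S).centralizer
  have := Subring.isMulCommutative_centralizer_centralizer hC
  let A' : Matrix n n K := fun i j => ⟨A i j, Set.subset_centralizer_centralizer (hA i j)⟩
  let B' : Matrix n n K := fun i j =>
    ⟨B i j, Matrix.mem_centralizer_centralizer_of_mul_eq_one hA hAB hBA i j⟩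
  have lift_eq_one {X Y : Matrix n n K} (h : X.map K.subtype * Y.map K.subtype = 1) :
      X * Y = 1 :=
    Matrix.map_injective K.subtype_injective <| by
      simp only [Matrix.map_mul, h, Matrix.map_one _ (map_zero K.subtype) (map_one K.subtype)]
  have hA'B' : A' * B' = 1 := lift_eq_one hAB
  have hB'A' : B' * A' = 1 := lift_eq_one hBA
  have hA' : ∀ i j, A' i j ∈ C.comap K.subtype := hA
  refine ⟨A'.det, Matrix.det_mem_of_forall_mem hA', B'.det, ?_, ?_, fun i j =>
    ⟨A'.adjugate i j, Matrix.adjugate_mem_of_forall_mem hA' i j, ?_⟩⟩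
  · exact congrArg Subtype.val
      (show A'.det * B'.det = 1 by rw [← Matrix.det_mul, hA'B', Matrix.det_one])
  · exact congrArg Subtype.val
      (show B'.det * A'.det = 1 by rw [← Matrix.det_mul, hB'A', Matrix.det_one])
  · have := congrArg Subtype.val
      (congrFun (congrFun (Matrix.eq_det_smul_adjugate_of_mul_eq_one hA'B') i) j)
    rwa [Matrix.smul_apply, smul_eq_mul, mul_comm] at this

/-- The ring `C T⁻¹`, where `T` is the set of elements of `C` invertible in `S`. -/
def Subring.fractions (C : Subring S) (hC : ∀ x ∈ C, ∀ y ∈ C, x * y = y * x) : Subring S where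
  carrier := {x | ∃ a ∈ C, ∃ d ∈ C, ∃ u : S, d * u = 1 ∧ u * d = 1 ∧ x = a * u}
  zero_mem' := ⟨0, C.zero_mem, 1, C.one_mem, 1, mul_one 1, mul_one 1, (zero_mul 1).symm⟩
  one_mem' := ⟨1, C.one_mem, 1, C.one_mem, 1, mul_one 1, mul_one 1, (mul_one 1).symm⟩
  add_mem' := by
    rintro _ _ ⟨a, ha, s, hs, u, hsu, hus, rfl⟩ ⟨b, hb, t, ht, v, htv, hvt, rfl⟩
    have hsv : s * v = v * s := Set.centralizer_centralizer_comm_of_comm hC _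
      (Set.subset_centralizer_centralizer hs) _
      (Subring.mem_centralizer_centralizer_of_mul_eq_one ht htv hvt)
    refine ⟨a * t + b * s, add_mem (mul_mem ha ht) (mul_mem hb hs), s * t, mul_mem hs ht,
      v * u, ?_, ?_, ?_⟩
    · rw [mul_assoc, ← mul_assoc t, htv, one_mul, hsu]
    · rw [mul_assoc, ← mul_assoc u, hus, one_mul, hvt]
    · rw [add_mul, mul_assoc, mul_assoc, ← mul_assoc t, htv, one_mul, ← mul_assoc s, hsv,
        mul_assoc, hsu, mul_one]
  mul_mem' := by
    rintro _ _ ⟨a, ha, s, hs, u, hsu, hus, rfl⟩ ⟨b, hb, t, ht, v, htv, hvt, rfl⟩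
    have hu := Subring.mem_centralizer_centralizer_of_mul_eq_one hs hsu hus
    have comm := Set.centralizer_centralizer_comm_of_comm hC
    refine ⟨a * b, mul_mem ha hb, s * t, mul_mem hs ht, v * u, ?_, ?_, ?_⟩
    · rw [mul_assoc, ← mul_assoc t, htv, one_mul, hsu]
    · rw [mul_assoc, ← mul_assoc u, hus, one_mul, hvt]
    · rw [mul_assoc, ← mul_assoc u, comm _ hu _ (Set.subset_centralizer_centralizer hb),
        mul_assoc b, comm _ hu _ (Subring.mem_centralizer_centralizer_of_mul_eq_one ht htv hvt),
        mul_assoc]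
  neg_mem' := by
    rintro _ ⟨a, ha, d, hd, u, hdu, hud, rfl⟩
    exact ⟨-a, neg_mem ha, d, hd, u, hdu, hud, (neg_mul a u).symm⟩

namespace Subring

variable {C : Subring S} (hC : ∀ x ∈ C, ∀ y ∈ C, x * y = y * x)

theorem le_fractions : C ≤ C.fractions hC :=
  fun a ha => ⟨a, ha, 1, C.one_mem, 1, mul_one 1, mul_one 1, (mul_one a).symm⟩

theorem fractions_le {D : Subring S} (hCD : C ≤ D)
    (hD : ∀ d ∈ C, ∀ u : S, d * u = 1 → u * d = 1 → u ∈ D) : C.fractions hC ≤ D := by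
  rintro _ ⟨a, ha, d, hd, u, hdu, hud, rfl⟩
  exact mul_mem (hCD ha) (hD d hd u hdu hud)

theorem mem_fractions_of_mul_eq_one {x y : S} (hx : x ∈ C.fractions hC) (hxy : x * y = 1)
    (hyx : y * x = 1) : y ∈ C.fractions hC := by
  obtain ⟨a, ha, d, hd, u, hdu, hud, rfl⟩ := hx
  refine ⟨d, hd, a, ha, u * y, by rw [← mul_assoc, hxy], ?_, by rw [← mul_assoc, hdu, one_mul]⟩
  calc u * y * a = u * (y * (a * u)) * d := by simp only [mul_assoc, hud, mul_one]
    _ = 1 := by rw [hyx, mul_one, hud]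

theorem fractions_le_centralizer_centralizer :
    C.fractions hC ≤ centralizer (C : Set S).centralizer := by
  rintro _ ⟨a, ha, d, hd, u, hdu, hud, rfl⟩
  exact mul_mem (Set.subset_centralizer_centralizer ha)
    (mem_centralizer_centralizer_of_mul_eq_one hd hdu hud)

theorem mul_comm_of_mem_fractions {x y : S} (hx : x ∈ C.fractions hC) (hy : y ∈ C.fractions hC) :
    x * y = y * x :=
  Set.centralizer_centralizer_comm_of_comm hC _ (fractions_le_centralizer_centralizer hC hx) _
    (fractions_le_centralizer_centralizer hC hy)

end Subring

theorem Matrix.mem_fractions_of_mul_eq_one {n : Type*} [Fintype n] [DecidableEq n]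
    {C : Subring S} (hC : ∀ x ∈ C, ∀ y ∈ C, x * y = y * x) {A B : Matrix n n S}
    (hA : ∀ i j, A i j ∈ C) (hAB : A * B = 1) (hBA : B * A = 1) (i j : n) :
    B i j ∈ C.fractions hC := by
  obtain ⟨d, hd, e, hde, hed, hB⟩ := Matrix.exists_eq_mul_inv_of_mul_eq_one hC hA hAB hBA
  obtain ⟨a, ha, hBij⟩ := hB i j
  exact ⟨a, ha, d, hd, e, hde, hed, hBij⟩

theorem divisionClosure_eq_fractions {C : Subring S} (hC : ∀ x ∈ C, ∀ y ∈ C, x * y = y * x) :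
    divisionClosure C = C.fractions hC :=
  le_antisymm
    (sInf_le ⟨Subring.le_fractions hC, fun _ hx _ => Subring.mem_fractions_of_mul_eq_one hC hx⟩)
    (le_sInf fun _ ⟨hCD, hD⟩ => Subring.fractions_le hC hCD fun d hd => hD d (hCD hd))

theorem rationalClosure_eq_fractions {C : Subring S} (hC : ∀ x ∈ C, ∀ y ∈ C, x * y = y * x) :
    rationalClosure C = C.fractions hC := by
  refine le_antisymm
    (sInf_le ⟨Subring.le_fractions hC, fun _ _ _ => Matrix.mem_fractions_of_mul_eq_one hC⟩)
    (le_sInf fun D ⟨hCD, hD⟩ => Subring.fractions_le hC hCD fun d hd u hdu hud => ?_)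
  have hd' : ∀ i j, Matrix.scalar (Fin 1) d i j ∈ C := fun i j => by
    rw [Matrix.scalar_apply, Matrix.diagonal_apply]
    split_ifs
    exacts [hd, C.zero_mem]
  have := hD 1 _ _ hd' (by rw [← map_mul, hdu, map_one]) (by rw [← map_mul, hud, map_one]) 0 0
  rwa [Matrix.scalar_apply, Matrix.diagonal_apply_eq] at this

end Fractions

theorem RingHom.coe_range_fractions {R S : Type*} [Ring R] [Ring S] (f : R →+* S)
    (hf : ∀ x ∈ f.range, ∀ y ∈ f.range, x * y = y * x) :
    (f.range.fractions hf : Set S) =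
      {x : S | ∃ (r t : R) (u : S), f t * u = 1 ∧ u * f t = 1 ∧ x = f r * u} := by
  ext x
  constructor
  · rintro ⟨_, ⟨r, rfl⟩, _, ⟨t, rfl⟩, u, h1, h2, rfl⟩
    exact ⟨r, t, u, h1, h2, rfl⟩
  · rintro ⟨r, t, u, h1, h2, rfl⟩
    exact ⟨f r, ⟨r, rfl⟩, f t, ⟨t, rfl⟩, u, h1, h2, rfl⟩

/-- For a ring homomorphism `f : R → S` with commutative image, the division
closure and the rational closure of `im f` in `S` both equal
`(im f)T⁻¹ = { f(r)·t⁻¹ }`, a commutative subring of `S`. -/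
theorem closures_eq_imageTinv_of_commutative_image
    {R S : Type*} [Ring R] [Ring S] (f : R →+* S)
    (hcomm : ∀ a b : R, f a * f b = f b * f a) :
    (divisionClosure f.range : Set S) =
      {x : S | ∃ (r t : R) (u : S), f t * u = 1 ∧ u * f t = 1 ∧ x = f r * u} ∧
    (rationalClosure f.range : Set S) =
      {x : S | ∃ (r t : R) (u : S), f t * u = 1 ∧ u * f t = 1 ∧ x = f r * u} ∧
    (∀ x ∈ divisionClosure f.range, ∀ y ∈ divisionClosure f.range, x * y = y * x) := by
  have hf : ∀ x ∈ f.range, ∀ y ∈ f.range, x * y = y * x := by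
    rintro _ ⟨a, rfl⟩ _ ⟨b, rfl⟩
    exact hcomm a b
  rw [divisionClosure_eq_fractions hf, rationalClosure_eq_fractions hf, f.coe_range_fractions hf]
  exact ⟨rfl, rfl, fun _ hx _ hy => Subring.mul_comm_of_mem_fractions hf hx hy⟩
end

section
/- Let S be a ring and R a commutative subring, A ∈ Mat_n(R) invertible in Mat_n(S) with inverse B. Then (det A)^{-1} commutes with every entry of adj(A), and B has commuting entries; in particular the inverse of A, though a priori a matrix over the noncommutative ring S, is a matrix over the commutative subring RT^{-1} of S. -/
/-!
An element of `S` commuting with all entries of a matrix commutes, as a scalar matrix, with the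
matrix, hence with its inverse, hence with all entries of the inverse. So the entries of `B` lie
in the double centralizer of `f R`, a commutative subring of `S` because `f R` is commutative.
Over that commutative ring the determinant is multiplicative, so `det B` inverts `det A`, and the
adjugate formula gives `B = det B • adj A`.
-/

namespace Matrix

variable {ι S : Type*} [Fintype ι] [DecidableEq ι]

theorem commute_apply_of_mul_eq_one_s14 [Ring S] {M B : Matrix ι ι S} (hMB : M * B = 1)
    (hBM : B * M = 1) {c : S} (hc : ∀ i j, Commute c (M i j)) (i j : ι) :
    Commute c (B i j) := by
  let u : (Matrix ι ι S)ˣ := ⟨M, B, hMB, hBM⟩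
  have hcu : Commute (scalar ι c) u := scalar_commute_iff.2 (ext hc)
  exact congrFun₂ (scalar_commute_iff.1 hcu.units_inv_right) i j

theorem apply_mem_centralizer_centralizer_of_mul_eq_one [Ring S] {M B : Matrix ι ι S}
    (hMB : M * B = 1) (hBM : B * M = 1) {T : Set S} (hM : ∀ i j, M i j ∈ T) (i j : ι) :
    B i j ∈ T.centralizer.centralizer := fun _ hc =>
  commute_apply_of_mul_eq_one_s14 hMB hBM (fun k l => (hc _ (hM k l)).symm) i j

theorem eq_det_smul_adjugate_of_mul_eq_one_s14 [CommRing S] {M B : Matrix ι ι S} (h : M * B = 1) :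
    B = B.det • M.adjugate := by
  obtain rfl := inv_eq_right_inv h
  rw [det_nonsing_inv]
  exact inv_def M

end Matrix

open Matrix

theorem Subring.isMulCommutative_centralizer_centralizer_s14 {S : Type*} [Ring S] {T : Set S}
    (hT : ∀ x ∈ T, ∀ y ∈ T, x * y = y * x) :
    IsMulCommutative (centralizer (centralizer T : Set S)) :=
  .of_setLike_mul_comm (Set.centralizer_centralizer_comm_of_comm hT)

open scoped IsMulCommutative

theorem inverse_entries_commute_and_in_RTinv_general
    {R S : Type*} [CommRing R] [Ring S] (f : R →+* S)
    {n : ℕ} (A : Matrix (Fin n) (Fin n) R) (B : Matrix (Fin n) (Fin n) S)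
    (hAB : A.map f * B = 1) (hBA : B * A.map f = 1) :
    ∃ s : S, f A.det * s = 1 ∧ s * f A.det = 1 ∧
      (∀ i j, s * f (A.adjugate i j) = f (A.adjugate i j) * s) ∧
      (∀ i j k l, B i j * B k l = B k l * B i j) ∧
      (∀ i j, ∃ r t : R, ∃ u : S, f t * u = 1 ∧ u * f t = 1 ∧ B i j = f r * u) := by
  let D := Subring.centralizer (Subring.centralizer (Set.range f) : Set S)
  have : IsMulCommutative D := Subring.isMulCommutative_centralizer_centralizer_s14 <| by
    rintro _ ⟨a, rfl⟩ _ ⟨b, rfl⟩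
    rw [← map_mul, mul_comm, map_mul]
  let g : R →+* D := f.codRestrict D fun r => Set.subset_centralizer_centralizer ⟨r, rfl⟩
  let B' : Matrix (Fin n) (Fin n) D := fun i j =>
    ⟨B i j, apply_mem_centralizer_centralizer_of_mul_eq_one hAB hBA
      (fun k l => Set.mem_range_self (A k l)) i j⟩
  have hAB' : A.map g * B' = 1 := map_injective Subtype.val_injective <|
    (Matrix.map_mul (f := D.subtype)).trans (hAB.trans (Matrix.map_one _ rfl rfl).symm)
  have hdet : g A.det * B'.det = 1 := by
    rw [g.map_det, RingHom.mapMatrix_apply, ← det_mul, hAB', det_one]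
  have hB' : B' = B'.det • A.adjugate.map g := by
    rw [← RingHom.mapMatrix_apply, g.map_adjugate]
    exact eq_det_smul_adjugate_of_mul_eq_one_s14 hAB'
  have hdet' : (B'.det : S) * f A.det = 1 := congrArg Subtype.val ((mul_comm _ _).trans hdet)
  refine ⟨B'.det, congrArg Subtype.val hdet, hdet',
    fun i j => congrArg Subtype.val (mul_comm B'.det (g (A.adjugate i j))),
    fun i j k l => congrArg Subtype.val (mul_comm (B' i j) (B' k l)),
    fun i j => ⟨A.adjugate i j, A.det, B'.det, congrArg Subtype.val hdet, hdet', ?_⟩⟩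
  exact congrArg Subtype.val ((congrFun₂ hB' i j).trans (mul_comm _ _))

/-- If `A` over the commutative subring `R` of `S` is invertible over `S` with
inverse `B`, then `(det A)⁻¹` commutes with all entries of `adj A`, the entries
of `B` commute with each other, and every entry of `B` lies in `RT⁻¹`. -/
theorem inverse_entries_commute_and_in_RTinv
    {R S : Type*} [CommRing R] [Ring S] (f : R →+* S) (hf : Function.Injective f)
    {n : ℕ} (A : Matrix (Fin n) (Fin n) R) (B : Matrix (Fin n) (Fin n) S)
    (hAB : A.map f * B = 1) (hBA : B * A.map f = 1) :
    ∃ s : S, f A.det * s = 1 ∧ s * f A.det = 1 ∧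
      (∀ i j, s * f (A.adjugate i j) = f (A.adjugate i j) * s) ∧
      (∀ i j k l, B i j * B k l = B k l * B i j) ∧
      (∀ i j, ∃ r t : R, ∃ u : S, f t * u = 1 ∧ u * f t = 1 ∧ B i j = f r * u) :=
  inverse_entries_commute_and_in_RTinv_general f A B hAB hBA
end
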